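/- Let χ be a symmetric {0,1}-valued function on pairs of distinct natural numbers with the extension property, and let c_random and c_max be the associated colorings. Then: (a) every almost node-coloring c on a subset A ⊆ ℕ^ℕ satisfies c ≤ c_random, via an embedding e : A → ℕ^ℕ with Δ(e(x),e(y)) = Δ(x,y) for all distinct x,y ∈ A; (b) every almost node-coloring c on a compact subset A ⊆ ℕ^ℕ satisfies c ≤ c_max. -/

import Mathlib

/-!
At a node `p` of the tree `ℕ^{<ℕ}`, an almost node-coloring colors the pairs of elements of `A`
branching at `p` according to their next digits `a ≠ b` only, so it is a countable graph on `ℕ`.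
The extension property embeds every countable graph greedily into `χ`; relabelling each digit
`x n` by such an embedding `f_{x↾n}` yields a map that preserves `Δ` and carries `c` to
`c_random`. Preserving `Δ` means being an isometry for `dist x y = 2^{-Δ(x,y)}`, hence an
embedding. For compact `A` the image is compact, so its `k`-th coordinates are bounded by some
strictly increasing `L k`; moving coordinate `k` to position `L k` and padding with zeros keeps
the `c_random`-colors and lands in `∏ₙ {0, …, n}`.
-/

open Cardinal Topology

/-- The least index where two sequences differ. -/
noncomputable def Delta {α : Type*} (x y : ℕ → α) : ℕ := sInf {n | x n ≠ y n}

/-- A set is homogeneous for a pair-coloring `c` if `c` is constant on pairs of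
distinct elements of the set. -/
def IsHomog {X : Type*} (c : X → X → Fin 2) (H : Set X) : Prop :=
  ∃ i : Fin 2, ∀ x ∈ H, ∀ y ∈ H, x ≠ y → c x y = i

/-- The homogeneity number of a pair-coloring: the least cardinality of a family of
homogeneous sets covering the space. -/
noncomputable def hm {X : Type*} (c : X → X → Fin 2) : Cardinal :=
  sInf { κ | ∃ F : Set (Set X), #F = κ ∧ (∀ H ∈ F, IsHomog c H) ∧ ⋃₀ F = Set.univ }

/-- The homogeneity number of the restriction of a coloring to a subset. -/
noncomputable def hmOn {X : Type*} (c : X → X → Fin 2) (Y : Set X) : Cardinal :=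
  sInf { κ | ∃ F : Set (Set X), #F = κ ∧ (∀ H ∈ F, H ⊆ Y ∧ IsHomog c H) ∧ ⋃₀ F = Y }

/-- A pair-coloring is continuous if it is continuous on `X × X` minus the diagonal. -/
def ContColoring {X : Type*} [TopologicalSpace X] (c : X → X → Fin 2) : Prop :=
  Continuous fun p : {q : X × X // q.1 ≠ q.2} => c p.val.1 p.val.2

/-- Symmetry of a pair-coloring on distinct points. -/
def SymmColoring {X : Type*} (c : X → X → Fin 2) : Prop :=
  ∀ x y : X, x ≠ y → c x y = c y x

/-- A continuous pair-coloring is reduced if no nonempty open set is homogeneous. -/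
def Reduced {X : Type*} [TopologicalSpace X] (c : X → X → Fin 2) : Prop :=
  ContColoring c ∧ ∀ U : Set X, IsOpen U → U.Nonempty → ¬ IsHomog c U

/-- The coloring `c_min` on the Cantor space: the parity of the first difference. -/
noncomputable def cmin : (ℕ → Bool) → (ℕ → Bool) → Fin 2 :=
  fun x y => if Even (Delta x y) then 0 else 1

/-- The coloring `c_parity` on the Baire space: the parity of the first difference. -/
noncomputable def cparity : (ℕ → ℕ) → (ℕ → ℕ) → Fin 2 :=
  fun x y => if Even (Delta x y) then 0 else 1

/-- A pair-coloring on a subset `A` of the Baire space is an almost node-coloring if the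
color of a pair `{x, y}` depends only on the restrictions of `x` and `y` to
`Δ(x, y) + 1`. -/
def AlmostNodeColoring (A : Set (ℕ → ℕ)) (d : (ℕ → ℕ) → (ℕ → ℕ) → Fin 2) : Prop :=
  ∀ x ∈ A, ∀ y ∈ A, ∀ x' ∈ A, ∀ y' ∈ A, x ≠ y → x' ≠ y' →
    (∀ i ≤ Delta x y, x i = x' i ∧ y i = y' i) → d x y = d x' y'

/-- The extension property of the (edge-coloring of the) random graph. -/
def ExtensionProperty (χ : ℕ → ℕ → Fin 2) : Prop :=
  ∀ A B : Finset ℕ, Disjoint A B →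
    ∃ n : ℕ, n ∉ A ∧ n ∉ B ∧ (∀ a ∈ A, χ n a = 1) ∧ (∀ b ∈ B, χ n b = 0)

/-- The coloring `c_random` associated to `χ`: the `χ`-color of the pair of values at
the first difference. -/
noncomputable def crandom (χ : ℕ → ℕ → Fin 2) : (ℕ → ℕ) → (ℕ → ℕ) → Fin 2 :=
  fun x y => χ (x (Delta x y)) (y (Delta x y))

open Function PiNat

section Delta

variable {α : Type*} {x y : ℕ → α}

theorem delta_eq_of_forall_lt {n : ℕ} (h : ∀ i < n, x i = y i) (hn : x n ≠ y n) :
    Delta x y = n :=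
  le_antisymm (Nat.sInf_le hn) <| not_lt.1 fun hlt =>
    (Nat.sInf_mem (s := {i | x i ≠ y i}) ⟨n, hn⟩ : x (Delta x y) ≠ y (Delta x y)) (h _ hlt)

theorem delta_eq_firstDiff (x y : ℕ → α) : Delta x y = firstDiff x y := by
  rcases eq_or_ne x y with rfl | hxy
  · simp [Delta, firstDiff_def]
  · exact delta_eq_of_forall_lt (fun i hi => apply_eq_of_lt_firstDiff hi) (apply_firstDiff_ne hxy)

theorem apply_eq_of_lt_delta {i : ℕ} (h : i < Delta x y) : x i = y i :=
  apply_eq_of_lt_firstDiff (delta_eq_firstDiff x y ▸ h)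

theorem apply_delta_ne (h : x ≠ y) : x (Delta x y) ≠ y (Delta x y) :=
  delta_eq_firstDiff x y ▸ apply_firstDiff_ne h

end Delta

theorem isEmbedding_of_delta_eq {A : Set (ℕ → ℕ)} {e : A → ℕ → ℕ}
    (he : ∀ x y : A, (x : ℕ → ℕ) ≠ y → e x ≠ e y ∧ Delta (e x) (e y) = Delta (x : ℕ → ℕ) y) :
    IsEmbedding e := by
  let := metricSpaceNatNat
  refine Isometry.isEmbedding (Isometry.of_dist_eq fun x y => ?_)
  rcases eq_or_ne (x : ℕ → ℕ) y with hxy | hxy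
  · rw [Subtype.ext hxy, dist_self, dist_self]
  obtain ⟨hexy, hΔ⟩ := he x y hxy
  rw [Subtype.dist_eq, dist_eq_of_ne hexy, dist_eq_of_ne hxy, ← delta_eq_firstDiff,
    ← delta_eq_firstDiff, hΔ]

section Spread

variable {L : ℕ → ℕ}

/-- The sequence `z` written at the positions `L 0, L 1, …` and padded with zeros. -/
noncomputable def spread (L : ℕ → ℕ) (z : ℕ → ℕ) : ℕ → ℕ := extend L z fun _ => 0

theorem spread_apply (hL : Injective L) (z : ℕ → ℕ) (k : ℕ) : spread L z (L k) = z k :=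
  hL.extend_apply z _ k

theorem spread_apply_of_notMem_range (z : ℕ → ℕ) {m : ℕ} (hmL : m ∉ Set.range L) :
    spread L z m = 0 :=
  extend_apply' z _ m hmL

theorem continuous_spread : Continuous (spread L) := by
  refine continuous_pi fun m => ?_
  by_cases hmL : ∃ k, L k = m
  · simp only [spread, extend, dif_pos hmL]
    exact continuous_apply _
  · simp only [spread_apply_of_notMem_range _ hmL]
    exact continuous_const

theorem isEmbedding_spread (hL : Injective L) : IsEmbedding (spread L) :=
  LeftInverse.isEmbedding (f := fun w => w ∘ L) (fun z => funext (spread_apply hL z))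
    (by fun_prop) continuous_spread

theorem delta_spread (hL : StrictMono L) {z w : ℕ → ℕ} (h : z ≠ w) :
    Delta (spread L z) (spread L w) = L (Delta z w) := by
  refine delta_eq_of_forall_lt (fun m hm => ?_) ?_
  · by_cases hmL : m ∈ Set.range L
    · obtain ⟨k, rfl⟩ := hmL
      rw [spread_apply hL.injective, spread_apply hL.injective]
      exact apply_eq_of_lt_delta (hL.lt_iff_lt.1 hm)
    · rw [spread_apply_of_notMem_range _ hmL, spread_apply_of_notMem_range _ hmL]
  · rw [spread_apply hL.injective, spread_apply hL.injective]
    exact apply_delta_ne h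

theorem crandom_spread (χ : ℕ → ℕ → Fin 2) (hL : StrictMono L) {z w : ℕ → ℕ} (h : z ≠ w) :
    crandom χ (spread L z) (spread L w) = crandom χ z w := by
  simp only [crandom, delta_spread hL h, spread_apply hL.injective]

theorem spread_le (hL : Injective L) {z : ℕ → ℕ} (hz : ∀ k, z k ≤ L k) (m : ℕ) :
    spread L z m ≤ m := by
  by_cases hmL : m ∈ Set.range L
  · obtain ⟨k, rfl⟩ := hmL
    exact (spread_apply hL z k).trans_le (hz k)
  · rw [spread_apply_of_notMem_range _ hmL]
    exact m.zero_le

end Spread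

theorem IsCompact.exists_strictMono_bound {K : Set (ℕ → ℕ)} (hK : IsCompact K) :
    ∃ L : ℕ → ℕ, StrictMono L ∧ ∀ z ∈ K, ∀ k, z k ≤ L k := by
  choose M hM using fun k => (hK.image (continuous_apply k)).bddAbove
  refine ⟨fun k => ∑ i ∈ Finset.range (k + 1), (M i + 1),
    strictMono_nat_of_lt_succ fun k => ?_, fun z hz k => ?_⟩
  · rw [Finset.sum_range_succ _ (k + 1)]
    omega
  · calc z k ≤ M k + 1 := (hM k ⟨z, hz, rfl⟩).trans (M k).le_succ
      _ ≤ ∑ i ∈ Finset.range (k + 1), (M i + 1) :=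
        Finset.single_le_sum (fun i _ => (M i + 1).zero_le) (Finset.self_mem_range_succ k)

namespace ExtensionProperty

section Realize

variable {χ : ℕ → ℕ → Fin 2} (hχ : ExtensionProperty χ)

noncomputable def nextVertex (prev adj : Finset ℕ) : ℕ :=
  (hχ adj (prev \ adj) Finset.disjoint_sdiff).choose

variable {hχ} {prev adj : Finset ℕ}

theorem nextVertex_notMem : hχ.nextVertex prev adj ∉ prev := by
  intro hmem
  obtain ⟨hadj, hrest, -⟩ := (hχ adj (prev \ adj) Finset.disjoint_sdiff).choose_spec
  by_cases ha : hχ.nextVertex prev adj ∈ adj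
  · exact hadj ha
  · exact hrest (Finset.mem_sdiff.2 ⟨hmem, ha⟩)

theorem chi_nextVertex_of_mem {a : ℕ} (ha : a ∈ adj) : χ (hχ.nextVertex prev adj) a = 1 :=
  (hχ adj (prev \ adj) Finset.disjoint_sdiff).choose_spec.2.2.1 a ha

theorem chi_nextVertex_of_notMem {b : ℕ} (hb : b ∈ prev) (hb' : b ∉ adj) :
    χ (hχ.nextVertex prev adj) b = 0 :=
  (hχ adj (prev \ adj) Finset.disjoint_sdiff).choose_spec.2.2.2 b (Finset.mem_sdiff.2 ⟨hb, hb'⟩)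

variable (hχ) (T : ℕ → ℕ → Fin 2)

noncomputable def realize (k : ℕ) : ℕ :=
  hχ.nextVertex (Finset.univ.image fun j : Fin k => realize j)
    ((Finset.univ.filter fun j : Fin k => T k j = 1).image fun j : Fin k => realize j)

variable {hχ T}

theorem realize_ne_of_lt {j k : ℕ} (h : j < k) : hχ.realize T k ≠ hχ.realize T j := by
  intro he
  have hj := Finset.mem_image_of_mem (fun j : Fin k => hχ.realize T j) (Finset.mem_univ ⟨j, h⟩)
  rw [← he, realize] at hj
  exact nextVertex_notMem hj

theorem realize_injective : Injective (hχ.realize T) := by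
  intro i j he
  by_contra hij
  rcases lt_or_gt_of_ne hij with h | h
  · exact realize_ne_of_lt h he.symm
  · exact realize_ne_of_lt h he

theorem chi_realize_of_lt {j k : ℕ} (h : j < k) :
    χ (hχ.realize T k) (hχ.realize T j) = T k j := by
  have hprev : hχ.realize T j ∈ Finset.univ.image fun i : Fin k => hχ.realize T i :=
    Finset.mem_image_of_mem _ (Finset.mem_univ (⟨j, h⟩ : Fin k))
  have hadj : hχ.realize T j ∈
      (Finset.univ.filter fun i : Fin k => T k i = 1).image (fun i : Fin k => hχ.realize T i) ↔
      T k j = 1 := by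
    simp only [Finset.mem_image, Finset.mem_filter, Finset.mem_univ, true_and,
      realize_injective.eq_iff]
    exact ⟨fun ⟨i, hi, hij⟩ => hij ▸ hi, fun hj => ⟨⟨j, h⟩, hj, rfl⟩⟩
  rw [realize]
  obtain hT | hT : T k j = 0 ∨ T k j = 1 := by omega
  · rw [hT]
    exact chi_nextVertex_of_notMem (hχ := hχ) hprev (hadj.not.2 (by simp [hT]))
  · rw [hT]
    exact chi_nextVertex_of_mem (hχ := hχ) (hadj.2 hT)

end Realize

theorem exists_injective_chi_eq {χ : ℕ → ℕ → Fin 2} (hχsym : ∀ m n : ℕ, m ≠ n → χ m n = χ n m)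
    (hχ : ExtensionProperty χ) (T : ℕ → ℕ → Fin 2) (hT : ∀ j k, j ≠ k → T j k = T k j) :
    ∃ f : ℕ → ℕ, Injective f ∧ ∀ j k, j ≠ k → χ (f j) (f k) = T j k := by
  refine ⟨hχ.realize T, realize_injective, fun j k hjk => ?_⟩
  rcases lt_or_gt_of_ne hjk with h | h
  · rw [hχsym _ _ (realize_injective.ne hjk), chi_realize_of_lt (hχ := hχ) h, hT k j hjk.symm]
  · exact chi_realize_of_lt (hχ := hχ) h

end ExtensionProperty

namespace AlmostNodeColoring

variable {χ : ℕ → ℕ → Fin 2} {A : Set (ℕ → ℕ)} {c : (ℕ → ℕ) → (ℕ → ℕ) → Fin 2}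

theorem eq_of_agree (hc : AlmostNodeColoring A c) {n : ℕ} {x y x' y' : ℕ → ℕ}
    (hx : x ∈ A) (hy : y ∈ A) (hx' : x' ∈ A) (hy' : y' ∈ A)
    (hxy : ∀ i < n, x i = y i) (hn : x n ≠ y n)
    (hxx' : ∀ i ≤ n, x i = x' i) (hyy' : ∀ i ≤ n, y i = y' i) : c x y = c x' y' := by
  have hne : x' ≠ y' := fun h => hn (by rw [hxx' n le_rfl, hyy' n le_rfl, h])
  refine hc x hx y hy x' hx' y' hy' (fun h => hn (congrFun h n)) hne fun i hi => ?_
  rw [delta_eq_of_forall_lt hxy hn] at hi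
  exact ⟨hxx' i hi, hyy' i hi⟩

theorem exists_color_at_node (hc : AlmostNodeColoring A c) (n : ℕ) (p : Fin n → ℕ) :
    ∃ T : ℕ → ℕ → Fin 2, ∀ x ∈ A, ∀ y ∈ A, (∀ i : Fin n, x i = p i) →
      (∀ i : Fin n, y i = p i) → x n ≠ y n → c x y = T (x n) (y n) := by
  have hcolor : ∀ a b : ℕ, ∃ t, ∀ x ∈ A, ∀ y ∈ A, (∀ i : Fin n, x i = p i) →
      (∀ i : Fin n, y i = p i) → x n = a → y n = b → a ≠ b → c x y = t := by
    intro a b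
    by_cases h : ∃ x ∈ A, ∃ y ∈ A, (∀ i : Fin n, x i = p i) ∧ (∀ i : Fin n, y i = p i) ∧
        x n = a ∧ y n = b
    · obtain ⟨x₀, hx₀, y₀, hy₀, hpx₀, hpy₀, rfl, rfl⟩ := h
      refine ⟨c x₀ y₀, fun x hx y hy hpx hpy hxn hyn hab => ?_⟩
      have hagree : ∀ {z z₀ : ℕ → ℕ}, (∀ i : Fin n, z i = p i) → (∀ i : Fin n, z₀ i = p i) →
          z n = z₀ n → ∀ i ≤ n, z i = z₀ i := fun hz hz₀ hzn i hi =>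
        hi.lt_or_eq.elim (fun hi => (hz ⟨i, hi⟩).trans (hz₀ ⟨i, hi⟩).symm) (· ▸ hzn)
      exact hc.eq_of_agree hx hy hx₀ hy₀ (fun i hi => (hpx ⟨i, hi⟩).trans (hpy ⟨i, hi⟩).symm)
        (hxn ▸ hyn ▸ hab) (hagree hpx hpx₀ hxn) (hagree hpy hpy₀ hyn)
    · push Not at h
      exact ⟨0, fun x hx y hy hpx hpy hxn hyn _ => (h x hx y hy hpx hpy hxn hyn).elim⟩
  choose T hT using hcolor
  exact ⟨T, fun x hx y hy hpx hpy hne => hT _ _ x hx y hy hpx hpy rfl rfl hne⟩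

/-- The graph `T` at a node need not be symmetric where no pair of `A` realizes it, so it is
symmetrized along `min`/`max` before being embedded into `χ`. -/
theorem exists_injective_chi_eq_at_node (hχsym : ∀ m n : ℕ, m ≠ n → χ m n = χ n m)
    (hχ : ExtensionProperty χ) (hcsym : ∀ x ∈ A, ∀ y ∈ A, x ≠ y → c x y = c y x)
    (hc : AlmostNodeColoring A c) (n : ℕ) (p : Fin n → ℕ) :
    ∃ f : ℕ → ℕ, Injective f ∧ ∀ x ∈ A, ∀ y ∈ A, (∀ i : Fin n, x i = p i) →
      (∀ i : Fin n, y i = p i) → x n ≠ y n → χ (f (x n)) (f (y n)) = c x y := by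
  obtain ⟨T, hT⟩ := hc.exists_color_at_node n p
  obtain ⟨f, hf, hχf⟩ := hχ.exists_injective_chi_eq hχsym (fun a b => T (min a b) (max a b))
    fun a b _ => by rw [min_comm, max_comm]
  refine ⟨f, hf, fun x hx y hy hpx hpy hne => ?_⟩
  rw [hχf _ _ hne]
  rcases lt_or_gt_of_ne hne with h | h
  · rw [min_eq_left h.le, max_eq_right h.le]
    exact (hT x hx y hy hpx hpy hne).symm
  · rw [min_eq_right h.le, max_eq_left h.le, hcsym x hx y hy fun he => hne (he ▸ rfl)]
    exact (hT y hy x hx hpy hpx hne.symm).symm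

theorem exists_isEmbedding_crandom (hχsym : ∀ m n : ℕ, m ≠ n → χ m n = χ n m)
    (hχ : ExtensionProperty χ) (hcsym : ∀ x ∈ A, ∀ y ∈ A, x ≠ y → c x y = c y x)
    (hc : AlmostNodeColoring A c) :
    ∃ e : A → (ℕ → ℕ), IsEmbedding e ∧ ∀ x y : A, (x : ℕ → ℕ) ≠ y →
      crandom χ (e x) (e y) = c x y ∧ Delta (e x) (e y) = Delta (x : ℕ → ℕ) y := by
  choose label hinj hlabel using hc.exists_injective_chi_eq_at_node hχsym hχ hcsym
  let e : A → ℕ → ℕ := fun x m => label m (fun i : Fin m => x.1 i) (x.1 m)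
  have hprefix : ∀ x y : A, ∀ m ≤ Delta x.1 y.1,
      (fun i : Fin m => x.1 i) = fun i : Fin m => y.1 i :=
    fun x y m hm => funext fun i => apply_eq_of_lt_delta (i.2.trans_le hm)
  have key : ∀ x y : A, (x : ℕ → ℕ) ≠ y →
      e x ≠ e y ∧ Delta (e x) (e y) = Delta x.1 y.1 ∧ crandom χ (e x) (e y) = c x y := by
    intro x y hxy
    have hne : e x (Delta x.1 y.1) ≠ e y (Delta x.1 y.1) := by
      simp only [e, hprefix x y _ le_rfl]
      exact (hinj _ _).ne (apply_delta_ne hxy)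
    have hΔ : Delta (e x) (e y) = Delta x.1 y.1 := delta_eq_of_forall_lt
      (fun m hm => by simp only [e, hprefix x y m hm.le, apply_eq_of_lt_delta hm]) hne
    refine ⟨fun h => hne (congrFun h _), hΔ, ?_⟩
    simp only [crandom, hΔ, e, hprefix x y _ le_rfl]
    exact hlabel _ _ x x.2 y y.2 (fun i => (congrFun (hprefix x y _ le_rfl) i)) (fun i => rfl)
      (apply_delta_ne hxy)
  exact ⟨e, isEmbedding_of_delta_eq fun x y h => ⟨(key x y h).1, (key x y h).2.1⟩,
    fun x y h => ⟨(key x y h).2.2, (key x y h).2.1⟩⟩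

theorem exists_isEmbedding_crandom_le (hχsym : ∀ m n : ℕ, m ≠ n → χ m n = χ n m)
    (hχ : ExtensionProperty χ) (hA : IsCompact A) (hcsym : ∀ x ∈ A, ∀ y ∈ A, x ≠ y → c x y = c y x)
    (hc : AlmostNodeColoring A c) :
    ∃ e : A → (ℕ → ℕ), IsEmbedding e ∧ (∀ x : A, ∀ n : ℕ, e x n ≤ n) ∧
      ∀ x y : A, (x : ℕ → ℕ) ≠ y → crandom χ (e x) (e y) = c x y := by
  obtain ⟨e, he, hec⟩ := hc.exists_isEmbedding_crandom hχsym hχ hcsym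
  have : CompactSpace A := isCompact_iff_compactSpace.1 hA
  obtain ⟨L, hL, hbound⟩ := (isCompact_range he.continuous).exists_strictMono_bound
  refine ⟨spread L ∘ e, (isEmbedding_spread hL.injective).comp he,
    fun x => spread_le hL.injective (hbound _ ⟨x, rfl⟩), fun x y hxy => ?_⟩
  have hexy : e x ≠ e y := he.injective.ne (Subtype.coe_injective.ne_iff.1 hxy)
  rw [comp_apply, comp_apply, crandom_spread χ hL hexy]
  exact (hec x y hxy).1

end AlmostNodeColoring

/-- `(a)` every almost node-coloring on a subset of the Baire space embeds into
`c_random` by a level-preserving embedding, and `(b)` every almost node-coloring on a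
compact subset of the Baire space embeds into `c_max`, i.e., into `c_random` restricted
to `∏ₙ {0, …, n}`. -/
theorem stmt7 (χ : ℕ → ℕ → Fin 2) (hχsym : ∀ m n : ℕ, m ≠ n → χ m n = χ n m)
    (hχ : ExtensionProperty χ) :
    (∀ (A : Set (ℕ → ℕ)) (c : (ℕ → ℕ) → (ℕ → ℕ) → Fin 2),
      (∀ x ∈ A, ∀ y ∈ A, x ≠ y → c x y = c y x) → AlmostNodeColoring A c →
      ∃ e : A → (ℕ → ℕ), IsEmbedding e ∧
        (∀ x y : A, (x : ℕ → ℕ) ≠ (y : ℕ → ℕ) →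
          crandom χ (e x) (e y) = c x y ∧ Delta (e x) (e y) = Delta (x : ℕ → ℕ) y) ) ∧
    (∀ (A : Set (ℕ → ℕ)) (c : (ℕ → ℕ) → (ℕ → ℕ) → Fin 2),
      IsCompact A → (∀ x ∈ A, ∀ y ∈ A, x ≠ y → c x y = c y x) → AlmostNodeColoring A c →
      ∃ e : A → (ℕ → ℕ), IsEmbedding e ∧ (∀ x : A, ∀ n : ℕ, e x n ≤ n) ∧
        (∀ x y : A, (x : ℕ → ℕ) ≠ (y : ℕ → ℕ) → crandom χ (e x) (e y) = c x y)) :=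
  ⟨fun _ _ hcsym hc => hc.exists_isEmbedding_crandom hχsym hχ hcsym,
    fun _ _ hA hcsym hc => hc.exists_isEmbedding_crandom_le hχsym hχ hA hcsym⟩
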